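/- arXiv:2306.13757 — 2 statements merged into one kernel-verified Lean document; each statement's English description precedes it below -/
import Mathlib

section
/- If (f, (φ_n), (h_n)): (A_n, α_n) ⇒ (B_n, β_n) is a strong homotopy morphism of inductive systems of C*-algebras with each A_n separable, with homotopy limit φ: A ⇒ B where A = lim A_n and B = lim B_n, then [[φ ∘ α_{∞,n}]] = [[β_{∞,f(n)} ∘ φ_n]] in [[A_n, B]] for all n ∈ ℕ, where α_{∞,n}: A_n → A and β_{∞,f(n)}: B_{f(n)} → B are the canonical maps. -/
open Filter Topology Set
open scoped NNReal ZeroAtInfty OnePoint CStarAlgebra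

noncomputable section

namespace AsymPaper

universe u v w

section Basic

variable {A : Type*} {B : Type*} {D : Type*} {A' : Type*} {A₀ : Type*}
variable [NonUnitalCStarAlgebra A] [NonUnitalCStarAlgebra B] [NonUnitalCStarAlgebra D]
variable [NonUnitalCStarAlgebra A'] [NonUnitalCStarAlgebra A₀]

/-- An asymptotic morphism `A ⇒ B` is a family of self-adjoint (ℂ-linear and star-preserving)
maps `φ_t : A → B`, continuous in `t`, which is asymptotically multiplicative. -/
def IsAsymptoticMorphism (φ : ℝ≥0 → A → B) : Prop :=
  (∀ t, IsLinearMap ℂ (φ t)) ∧ (∀ t a, φ t (star a) = star (φ t a)) ∧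
    (∀ a, Continuous fun t => φ t a) ∧
    (∀ a b : A, Tendsto (fun t => ‖φ t (a * b) - φ t a * φ t b‖) atTop (𝓝 0))

/-- Equivalence of asymptotic morphisms: `φ_t(a) - ψ_t(a) → 0` for every `a`. -/
def AsympEquiv (φ ψ : ℝ≥0 → A → B) : Prop :=
  ∀ a, Tendsto (fun t => ‖φ t a - ψ t a‖) atTop (𝓝 0)

/-- Asymptotic homotopy of asymptotic morphisms `A ⇒ B`, witnessed by an asymptotic
morphism `A ⇒ C([0,1], B)`. -/
def AsympHomotopic (φ ψ : ℝ≥0 → A → B) : Prop :=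
  ∃ θ : ℝ≥0 → A → C(unitInterval, B), IsAsymptoticMorphism θ ∧
    AsympEquiv (fun t a => θ t a 0) φ ∧ AsympEquiv (fun t a => θ t a 1) ψ

end Basic

/-- A bundled asymptotic morphism. -/
structure AsymptoticMorphism (A : Type u) (B : Type v)
    [NonUnitalCStarAlgebra A] [NonUnitalCStarAlgebra B] : Type (max u v) where
  toFun : ℝ≥0 → A → B
  isAsymptoticMorphism : IsAsymptoticMorphism toFun

section Classes

variable {A : Type*} {B : Type*} {D : Type*} {A' : Type*} {A₀ : Type*}
variable [NonUnitalCStarAlgebra A] [NonUnitalCStarAlgebra B] [NonUnitalCStarAlgebra D]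
variable [NonUnitalCStarAlgebra A'] [NonUnitalCStarAlgebra A₀]

/-- The relation of asymptotic homotopy on bundled asymptotic morphisms. -/
def AsympRel (φ ψ : AsymptoticMorphism A B) : Prop := AsympHomotopic φ.toFun ψ.toFun

end Classes

/-- `[[A, B]]`: homotopy classes of asymptotic morphisms from `A` to `B`. -/
def AsympClass (A : Type u) (B : Type v)
    [NonUnitalCStarAlgebra A] [NonUnitalCStarAlgebra B] : Type (max u v) :=
  Quot (@AsympRel A B _ _)

section Classes2

variable {A : Type*} {B : Type*} {D : Type*} {A' : Type*} {A₀ : Type*}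
variable [NonUnitalCStarAlgebra A] [NonUnitalCStarAlgebra B] [NonUnitalCStarAlgebra D]
variable [NonUnitalCStarAlgebra A'] [NonUnitalCStarAlgebra A₀]

/-- `[[φ]]`, the asymptotic homotopy class of an asymptotic morphism. -/
def AsympClass.mk (φ : AsymptoticMorphism A B) : AsympClass A B := Quot.mk _ φ

/-- A ⋆-homomorphism viewed as a (constant) family of maps. -/
def constFun (f : A →⋆ₙₐ[ℂ] B) : ℝ≥0 → A → B := fun _ a => f a

theorem isAsymptoticMorphism_constFun (f : A →⋆ₙₐ[ℂ] B) :
    IsAsymptoticMorphism (constFun f) := by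
  refine ⟨fun t => ⟨fun x y => map_add f x y, fun c x => map_smul f c x⟩,
    fun t a => map_star f a, fun a => continuous_const, fun a b => ?_⟩
  simp only [constFun, map_mul, sub_self, norm_zero]
  exact tendsto_const_nhds

/-- A ⋆-homomorphism viewed as a (constant) asymptotic morphism. -/
def constAM (f : A →⋆ₙₐ[ℂ] B) : AsymptoticMorphism A B :=
  ⟨constFun f, isAsymptoticMorphism_constFun f⟩

/-- The class `[[f]] ∈ [[A, B]]` of a ⋆-homomorphism. -/
def constClass (f : A →⋆ₙₐ[ℂ] B) : AsympClass A B := AsympClass.mk (constAM f)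

/-- Precomposition of a family of maps with a ⋆-homomorphism. -/
def compHomFun {B : Type*} (φ : ℝ≥0 → A → B) (γ : A' →⋆ₙₐ[ℂ] A) : ℝ≥0 → A' → B :=
  fun t a => φ t (γ a)

theorem IsAsymptoticMorphism.compHomFun {φ : ℝ≥0 → A → B} (hφ : IsAsymptoticMorphism φ)
    (γ : A' →⋆ₙₐ[ℂ] A) : IsAsymptoticMorphism (AsymPaper.compHomFun φ γ) := by
  obtain ⟨h1, h2, h3, h4⟩ := hφ
  refine ⟨fun t => ⟨fun x y => ?_, fun c x => ?_⟩, fun t a => ?_, fun a => h3 (γ a),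
    fun a b => ?_⟩
  · show φ t (γ (x + y)) = φ t (γ x) + φ t (γ y)
    rw [map_add]; exact (h1 t).map_add _ _
  · show φ t (γ (c • x)) = c • φ t (γ x)
    rw [map_smul]; exact (h1 t).map_smul _ _
  · show φ t (γ (star a)) = star (φ t (γ a))
    rw [map_star]; exact h2 t _
  · show Tendsto (fun t => ‖φ t (γ (a * b)) - φ t (γ a) * φ t (γ b)‖) atTop (𝓝 0)
    simpa only [map_mul] using h4 (γ a) (γ b)

theorem AsympHomotopic.compHomFun {φ ψ : ℝ≥0 → A → B} (h : AsympHomotopic φ ψ)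
    (γ : A' →⋆ₙₐ[ℂ] A) :
    AsympHomotopic (AsymPaper.compHomFun φ γ) (AsymPaper.compHomFun ψ γ) := by
  obtain ⟨θ, hθ, h0, h1⟩ := h
  exact ⟨AsymPaper.compHomFun θ γ, hθ.compHomFun γ, fun a => h0 (γ a), fun a => h1 (γ a)⟩

/-- Precomposition of an asymptotic morphism with a ⋆-homomorphism. -/
def AsymptoticMorphism.compHom (φ : AsymptoticMorphism A B) (γ : A' →⋆ₙₐ[ℂ] A) :
    AsymptoticMorphism A' B :=
  ⟨AsymPaper.compHomFun φ.toFun γ, φ.isAsymptoticMorphism.compHomFun γ⟩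

/-- The map `[[A, B]] → [[A', B]]` induced by precomposition with a ⋆-homomorphism. -/
def compClassMap (γ : A' →⋆ₙₐ[ℂ] A) : AsympClass A B → AsympClass A' B :=
  Quot.lift (fun φ => AsympClass.mk (φ.compHom γ))
    (fun φ ψ h => Quot.sound (AsympHomotopic.compHomFun h γ))

/-- Postcomposition of a family of maps with a ⋆-homomorphism. -/
def postHomFun {A : Type*} (ψ : B →⋆ₙₐ[ℂ] D) (φ : ℝ≥0 → A → B) : ℝ≥0 → A → D :=
  fun t a => ψ (φ t a)

theorem IsAsymptoticMorphism.postHomFun {φ : ℝ≥0 → A → B} (hφ : IsAsymptoticMorphism φ)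
    (ψ : B →⋆ₙₐ[ℂ] D) : IsAsymptoticMorphism (AsymPaper.postHomFun ψ φ) := by
  obtain ⟨h1, h2, h3, h4⟩ := hφ
  refine ⟨fun t => ⟨fun x y => ?_, fun c x => ?_⟩, fun t a => ?_,
    fun a => (map_continuous ψ).comp (h3 a), fun a b => ?_⟩
  · show ψ (φ t (x + y)) = ψ (φ t x) + ψ (φ t y)
    rw [(h1 t).map_add, map_add]
  · show ψ (φ t (c • x)) = c • ψ (φ t x)
    rw [(h1 t).map_smul, map_smul]
  · show ψ (φ t (star a)) = star (ψ (φ t a))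
    rw [h2, map_star]
  · refine squeeze_zero (fun t => norm_nonneg _) (fun t => ?_) (h4 a b)
    show ‖ψ (φ t (a * b)) - ψ (φ t a) * ψ (φ t b)‖ ≤ _
    rw [← map_mul, ← map_sub]
    exact NonUnitalStarAlgHom.norm_apply_le ψ _

theorem AsympEquiv.postHomFun {φ φ' : ℝ≥0 → A → B} (h : AsympEquiv φ φ')
    (ψ : B →⋆ₙₐ[ℂ] D) : AsympEquiv (AsymPaper.postHomFun ψ φ) (AsymPaper.postHomFun ψ φ') := by
  intro a
  refine squeeze_zero (fun t => norm_nonneg _) (fun t => ?_) (h a)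
  show ‖ψ (φ t a) - ψ (φ' t a)‖ ≤ _
  rw [← map_sub]
  exact NonUnitalStarAlgHom.norm_apply_le ψ _

/-- Pointwise postcomposition on continuous maps, as a ⋆-homomorphism. -/
def cmPostHom {X : Type*} [TopologicalSpace X] (ψ : B →⋆ₙₐ[ℂ] D) :
    C(X, B) →⋆ₙₐ[ℂ] C(X, D) where
  toFun f := ⟨fun x => ψ (f x), (map_continuous ψ).comp f.continuous⟩
  map_smul' c f := by ext x; simp
  map_zero' := by ext x; simp
  map_add' f g := by ext x; simp
  map_mul' f g := by ext x; simp
  map_star' f := by ext x; simp [map_star]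

theorem AsympHomotopic.postHomFun {φ φ' : ℝ≥0 → A → B} (h : AsympHomotopic φ φ')
    (ψ : B →⋆ₙₐ[ℂ] D) :
    AsympHomotopic (AsymPaper.postHomFun ψ φ) (AsymPaper.postHomFun ψ φ') := by
  obtain ⟨θ, hθ, h0, h1⟩ := h
  exact ⟨AsymPaper.postHomFun (cmPostHom ψ) θ, hθ.postHomFun _,
    fun a => AsympEquiv.postHomFun h0 ψ a, fun a => AsympEquiv.postHomFun h1 ψ a⟩

/-- The map `[[A, B]] → [[A, D]]` induced by postcomposition with a ⋆-homomorphism. -/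
def postClassMap (ψ : B →⋆ₙₐ[ℂ] D) : AsympClass A B → AsympClass A D :=
  Quot.lift
    (fun φ => AsympClass.mk ⟨AsymPaper.postHomFun ψ φ.toFun, φ.isAsymptoticMorphism.postHomFun ψ⟩)
    (fun φ φ' h => Quot.sound (AsympHomotopic.postHomFun h ψ))

/-- Genuine homotopy of ⋆-homomorphisms. -/
def HomHomotopic (φ ψ : A →⋆ₙₐ[ℂ] B) : Prop :=
  ∃ H : A →⋆ₙₐ[ℂ] C(unitInterval, B), (∀ a, H a 0 = φ a) ∧ (∀ a, H a 1 = ψ a)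

/-- The relation on ⋆-homomorphisms of being asymptotically homotopic
(as constant asymptotic morphisms). -/
def HRel (f g : A →⋆ₙₐ[ℂ] B) : Prop := AsympHomotopic (constFun f) (constFun g)

/-- The point-norm topology on the space of ⋆-homomorphisms. -/
instance homTopology : TopologicalSpace (A →⋆ₙₐ[ℂ] B) :=
  TopologicalSpace.induced (fun f => (f : A → B)) inferInstance

end Classes2

/-- `H(A, B)`: the image of `Hom(A,B)` in `[[A,B]]`, realized as the quotient of `Hom(A, B)` by
asymptotic homotopy; it carries the quotient topology coming from the point-norm topology. -/
def HClass (A : Type u) (B : Type v) [NonUnitalCStarAlgebra A] [NonUnitalCStarAlgebra B] :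
    Type (max u v) :=
  Quot (@HRel A B _ _)

section Classes3

variable {A : Type*} {B : Type*} {D : Type*} {A' : Type*} {A₀ : Type*}
variable [NonUnitalCStarAlgebra A] [NonUnitalCStarAlgebra B] [NonUnitalCStarAlgebra D]
variable [NonUnitalCStarAlgebra A'] [NonUnitalCStarAlgebra A₀]

instance HClass.instTopologicalSpace (A : Type u) (B : Type v)
    [NonUnitalCStarAlgebra A] [NonUnitalCStarAlgebra B] : TopologicalSpace (HClass A B) :=
  inferInstanceAs (TopologicalSpace (Quot (@HRel A B _ _)))

/-- The class in `H(A, B)` of a ⋆-homomorphism. -/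
def HClass.mk (f : A →⋆ₙₐ[ℂ] B) : HClass A B := Quot.mk _ f

/-- The map `H(A, B) → H(A', B)` induced by precomposition with a ⋆-homomorphism. -/
def hcompClassMap (γ : A' →⋆ₙₐ[ℂ] A) : HClass A B → HClass A' B :=
  Quot.lift (fun f => HClass.mk (f.comp γ))
    (fun f g h => Quot.sound (AsympHomotopic.compHomFun h γ))

/-- The zero ⋆-homomorphism. -/
def zeroHom (A B : Type*) [NonUnitalCStarAlgebra A] [NonUnitalCStarAlgebra B] :
    A →⋆ₙₐ[ℂ] B where
  toFun _ := 0
  map_smul' _ _ := by simp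
  map_zero' := rfl
  map_add' _ _ := by simp
  map_mul' _ _ := by simp
  map_star' _ := by simp

end Classes3

section Systems

/-- The transition maps of an inductive system. -/
def transit {A : ℕ → Type u} [∀ n, NonUnitalCStarAlgebra (A n)]
    (α : ∀ n, A n →⋆ₙₐ[ℂ] A (n + 1)) {n m : ℕ} (hnm : n ≤ m) (a : A n) : A m :=
  Nat.leRecOn hnm (fun {k} x => α k x) a

/-- `(L, ι)` is the inductive limit of the system `(A, α)`: the maps are compatible, the union of
their ranges is dense, and the norm of `ι n a` is the limit of the norms along the system. -/
def IsInductiveLimit {A : ℕ → Type u} [∀ n, NonUnitalCStarAlgebra (A n)]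
    (α : ∀ n, A n →⋆ₙₐ[ℂ] A (n + 1)) (L : Type v) [NonUnitalCStarAlgebra L]
    (ι : ∀ n, A n →⋆ₙₐ[ℂ] L) : Prop :=
  (∀ n, (ι (n + 1)).comp (α n) = ι n) ∧
    Dense (⋃ n, Set.range (ι n)) ∧
    ∀ (n : ℕ) (a : A n),
      Tendsto (fun m => ‖transit α (Nat.le_add_right n m) a‖) atTop (𝓝 ‖ι n a‖)

/-- A ⋆-homomorphism `α : A₀ → A` is semiprojective if for every inductive system with surjective
connecting maps and limit `L` and every ⋆-homomorphism `φ : A → L`, the composition `φ ∘ α`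
lifts to some finite stage of the system. -/
def IsSemiprojective.{w₁, u₁, v₁} {A₀ : Type u₁} {A : Type v₁}
    [NonUnitalCStarAlgebra A₀] [NonUnitalCStarAlgebra A] (α : A₀ →⋆ₙₐ[ℂ] A) : Prop :=
  ∀ (B : ℕ → Type w₁) [∀ n, NonUnitalCStarAlgebra (B n)]
    (β : ∀ n, B n →⋆ₙₐ[ℂ] B (n + 1)) (L : Type w₁) [NonUnitalCStarAlgebra L]
    (ι : ∀ n, B n →⋆ₙₐ[ℂ] L),
    (∀ n, Function.Surjective (β n)) → IsInductiveLimit β L ι →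
      ∀ φ : A →⋆ₙₐ[ℂ] L, ∃ (n : ℕ) (ψ : A₀ →⋆ₙₐ[ℂ] B n), (ι n).comp ψ = φ.comp α

end Systems

/-- A separable C⋆-algebra together with a semiprojective ⋆-homomorphism into `A`. -/
structure SemiprojectivePair (A : Type u) [NonUnitalCStarAlgebra A] : Type (u + 1) where
  carrier : Type u
  [inst : NonUnitalCStarAlgebra carrier]
  [sep : TopologicalSpace.SeparableSpace carrier]
  hom : carrier →⋆ₙₐ[ℂ] A
  semiproj : IsSemiprojective.{u} hom

attribute [instance] SemiprojectivePair.inst SemiprojectivePair.sep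

/-- A bundled separable C⋆-algebra. -/
structure SeparableCStarAlgebra : Type (u + 1) where
  carrier : Type u
  [inst : NonUnitalCStarAlgebra carrier]
  [sep : TopologicalSpace.SeparableSpace carrier]

attribute [instance] SeparableCStarAlgebra.inst SeparableCStarAlgebra.sep

section Pullback

variable {A : Type u} {A' : Type*} {B : Type v}
variable [NonUnitalCStarAlgebra A] [NonUnitalCStarAlgebra A'] [NonUnitalCStarAlgebra B]

/-- For a semiprojective `γ : A' → A`, every class in `[[A, B]]` composed with `γ` is represented
by a genuine ⋆-homomorphism; `pullbackH γ` sends the class to the corresponding element of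
`H(A', B)`.  (For non-semiprojective `γ` the junk value `0` is used when no representative
exists.) -/
def pullbackH (γ : A' →⋆ₙₐ[ℂ] A) (x : AsympClass A B) : HClass A' B :=
  @dite _ (∃ f : A' →⋆ₙₐ[ℂ] B, compClassMap γ x = constClass f) (Classical.propDecidable _)
    (fun h => HClass.mk h.choose) (fun _ => HClass.mk (zeroHom A' B))

end Pullback

/-- The topology on `[[A, B]]`: the weakest topology making `pullbackH α : [[A,B]] → H(A₀,B)`
continuous for every separable C⋆-algebra `A₀` and every semiprojective `α : A₀ → A`. -/
instance AsympClass.topologicalSpace (A : Type u) (B : Type v)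
    [NonUnitalCStarAlgebra A] [NonUnitalCStarAlgebra B] :
    TopologicalSpace (AsympClass A B) :=
  ⨅ P : SemiprojectivePair A,
    TopologicalSpace.induced (pullbackH (B := B) P.hom) inferInstance



section InvLim

/-- The inverse (projective) limit of a sequence of spaces, as a subspace of the product. -/
def InvLim (X : ℕ → Type w) (g : ∀ n, X (n + 1) → X n) : Type w :=
  { x : ∀ n, X n // ∀ n, g n (x (n + 1)) = x n }

instance InvLim.instTopologicalSpace (X : ℕ → Type w) [∀ n, TopologicalSpace (X n)]
    (g : ∀ n, X (n + 1) → X n) : TopologicalSpace (InvLim X g) :=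
  inferInstanceAs (TopologicalSpace { x : ∀ n, X n // ∀ n, g n (x (n + 1)) = x n })

end InvLim

section HLim

variable {A : ℕ → Type u} [∀ n, NonUnitalCStarAlgebra (A n)]
variable {B : ℕ → Type v} [∀ n, NonUnitalCStarAlgebra (B n)]
variable {L : Type w} [NonUnitalCStarAlgebra L]

/-- The defining formula for the homotopy limit of a strong homotopy morphism of inductive
systems: for `a ∈ A n` and `m ≤ t < m + 1` (with `m ≥ n`) the value is
`ι_{f(m+1)} (h_m (α_{m,n} a) (t - m))`. -/
def hLimFormula (α : ∀ n, A n →⋆ₙₐ[ℂ] A (n + 1)) (ιB : ∀ n, B n →⋆ₙₐ[ℂ] L) (f : ℕ → ℕ)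
    (h : ∀ n, A n →⋆ₙₐ[ℂ] C(unitInterval, B (f (n + 1)))) (n : ℕ) (a : A n) (t : ℝ≥0) : L :=
  ιB (f (max n ⌊(t : ℝ)⌋₊ + 1))
    (h (max n ⌊(t : ℝ)⌋₊) (transit α (le_max_left n ⌊(t : ℝ)⌋₊) a)
      (Set.projIcc (0 : ℝ) 1 zero_le_one ((t : ℝ) - (max n ⌊(t : ℝ)⌋₊ : ℕ))))

/-- `φ` is (a representative of) the homotopy limit of the strong homotopy morphism given by
`(f, φ_n, h_n)`: it is an asymptotic morphism agreeing asymptotically with the defining formula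
on each `A n`. -/
def IsHomotopyLimit (α : ∀ n, A n →⋆ₙₐ[ℂ] A (n + 1)) {AL : Type*} [NonUnitalCStarAlgebra AL]
    (ιA : ∀ n, A n →⋆ₙₐ[ℂ] AL) (ιB : ∀ n, B n →⋆ₙₐ[ℂ] L) (f : ℕ → ℕ)
    (h : ∀ n, A n →⋆ₙₐ[ℂ] C(unitInterval, B (f (n + 1)))) (φ : ℝ≥0 → AL → L) : Prop :=
  IsAsymptoticMorphism φ ∧
    ∀ (n : ℕ) (a : A n),
      Tendsto (fun t => ‖φ t (ιA n a) - hLimFormula α ιB f h n a t‖) atTop (𝓝 0)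

end HLim

section CH

variable {A : Type u} {B : Type v} {D : Type w}
variable [NonUnitalCStarAlgebra A] [NonUnitalCStarAlgebra B] [NonUnitalCStarAlgebra D]

/-- An (increasing) reparametrization: a homeomorphism of `[0, ∞)`. -/
def IsReparam (r : ℝ≥0 → ℝ≥0) : Prop := ∃ e : ℝ≥0 ≃ₜ ℝ≥0, (e : ℝ≥0 → ℝ≥0) = r

/-- The composition `(ψ_{r(t)} ∘ φ_t)_t` of two families along a reparametrization `r`. -/
def compAlong (ψ : ℝ≥0 → B → D) (r : ℝ≥0 → ℝ≥0) (φ : ℝ≥0 → A → B) : ℝ≥0 → A → D :=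
  fun t a => ψ (r t) (φ t a)

/-- `F` is the Connes–Higson composition `[[A,B]] × [[B,D]] → [[A,D]]`: for all representatives
`φ, ψ` there is `r₀` such that for every reparametrization `r ≥ r₀`, the family
`(ψ_{r(t)} ∘ φ_t)_t` is an asymptotic morphism whose class is `F [[φ]] [[ψ]]`. -/
def IsCHComposition (F : AsympClass A B → AsympClass B D → AsympClass A D) : Prop :=
  ∀ (φ : AsymptoticMorphism A B) (ψ : AsymptoticMorphism B D),
    ∃ r₀ : ℝ≥0 → ℝ≥0, ∀ r : ℝ≥0 → ℝ≥0, IsReparam r → (∀ t, r₀ t ≤ r t) →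
      ∃ hr : IsAsymptoticMorphism (compAlong ψ.toFun r φ.toFun),
        F (AsympClass.mk φ) (AsympClass.mk ψ) = AsympClass.mk ⟨compAlong ψ.toFun r φ.toFun, hr⟩

end CH

section Ev

/-- Evaluation at a point, as a ⋆-homomorphism `C(X, B) → B`. -/
def evCM (X : Type w) [TopologicalSpace X] [CompactSpace X]
    (B : Type v) [NonUnitalCStarAlgebra B] (x : X) : C(X, B) →⋆ₙₐ[ℂ] B where
  toFun f := f x
  map_smul' _ _ := rfl
  map_zero' := rfl
  map_add' _ _ := rfl
  map_mul' _ _ := rfl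
  map_star' _ := rfl

end Ev

end AsymPaper


open AsymPaper Filter Topology TopologicalSpace
open scoped NNReal ZeroAtInfty OnePoint CStarAlgebra

universe u v w

namespace StmtAux

open AsymPaper Filter Topology TopologicalSpace Set
open scoped NNReal

section Transit

variable {A : ℕ → Type u} [∀ n, NonUnitalCStarAlgebra (A n)]
variable (α : ∀ n, A n →⋆ₙₐ[ℂ] A (n + 1))

/-- `transit` bundled as a ⋆-homomorphism. -/
def transitHom {n m : ℕ} (hnm : n ≤ m) : A n →⋆ₙₐ[ℂ] A m :=
  Nat.leRecOn hnm (fun {k} g => (α k).comp g) (NonUnitalStarAlgHom.id ℂ (A n))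

theorem transitHom_self {n : ℕ} :
    transitHom α (le_refl n) = NonUnitalStarAlgHom.id ℂ (A n) :=
  Nat.leRecOn_self _

theorem transitHom_succ {n m : ℕ} (hnm : n ≤ m) (h' : n ≤ m + 1) :
    transitHom α h' = (α m).comp (transitHom α hnm) :=
  Nat.leRecOn_succ hnm _

theorem transit_succ {n m : ℕ} (hm : n ≤ m) {h' : n ≤ m + 1} (a : A n) :
    transit α h' a = α m (transit α hm a) :=
  Nat.leRecOn_succ hm a

theorem transit_eq {n m : ℕ} (hnm : n ≤ m) (a : A n) :
    transit α hnm a = transitHom α hnm a := by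
  induction m, hnm using Nat.le_induction with
  | base =>
      rw [transitHom_self]
      exact Nat.leRecOn_self a
  | succ m hm ih =>
      rw [transitHom_succ α hm, transit_succ α hm, ih]
      rfl

end Transit

section IotaTransit

variable {B : ℕ → Type u} [∀ n, NonUnitalCStarAlgebra (B n)]
variable {BL : Type u} [NonUnitalCStarAlgebra BL]
variable (β : ∀ n, B n →⋆ₙₐ[ℂ] B (n + 1)) (ιB : ∀ n, B n →⋆ₙₐ[ℂ] BL)

theorem iota_transit (hB1 : ∀ m, (ιB (m + 1)).comp (β m) = ιB m)
    {p q : ℕ} (hpq : p ≤ q) (b : B p) : ιB q (transit β hpq b) = ιB p b := by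
  induction q, hpq using Nat.le_induction with
  | base => rw [transit_eq, transitHom_self]; rfl
  | succ q hq ih =>
      rw [transit_eq, transitHom_succ β hq]
      show ιB (q + 1) ((β q) (transitHom β hq b)) = ιB p b
      have := DFunLike.congr_fun (hB1 q) (transitHom β hq b)
      rw [NonUnitalStarAlgHom.comp_apply] at this
      rw [this, ← transit_eq]
      exact ih

end IotaTransit

section Main

variable {A : ℕ → Type u} [∀ n, NonUnitalCStarAlgebra (A n)]
variable {B : ℕ → Type u} [∀ n, NonUnitalCStarAlgebra (B n)]
variable (α : ∀ n, A n →⋆ₙₐ[ℂ] A (n + 1)) (β : ∀ n, B n →⋆ₙₐ[ℂ] B (n + 1))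
variable {BL : Type u} [NonUnitalCStarAlgebra BL] (ιB : ∀ n, B n →⋆ₙₐ[ℂ] BL)
variable (f : ℕ → ℕ)
variable (h : ∀ n, A n →⋆ₙₐ[ℂ] C(unitInterval, B (f (n + 1))))
variable (n : ℕ)

/-- The value of the homotopy-limit formula at "stage `M`, time `u`", as a ⋆-hom in `a`. -/
def pieceHom (M : ℕ) (hM : n ≤ M) (u : ℝ) : A n →⋆ₙₐ[ℂ] BL :=
  (ιB (f (M + 1))).comp
    ((evCM unitInterval (B (f (M + 1))) (Set.projIcc (0 : ℝ) 1 zero_le_one (u - (M : ℕ)))).comp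
      ((h M).comp (transitHom α hM)))

theorem pieceHom_apply (M : ℕ) (hM : n ≤ M) (u : ℝ) (a : A n) :
    pieceHom α ιB f h n M hM u a =
      ιB (f (M + 1)) ((h M (transitHom α hM a))
        (Set.projIcc (0 : ℝ) 1 zero_le_one (u - (M : ℕ)))) := rfl

theorem pieceHom_congr {M M' : ℕ} (e : M = M') (hM : n ≤ M) (hM' : n ≤ M') (u : ℝ) (a : A n) :
    pieceHom α ιB f h n M hM u a = pieceHom α ιB f h n M' hM' u a := by
  subst e; rfl

theorem continuous_pieceHom (M : ℕ) (hM : n ≤ M) (a : A n) :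
    Continuous (fun u : ℝ => pieceHom α ιB f h n M hM u a) := by
  simp only [pieceHom_apply]
  exact (map_continuous (ιB (f (M + 1)))).comp
    ((h M (transitHom α hM a)).continuous.comp
      (continuous_projIcc.comp (continuous_id.sub continuous_const)))

/-- The homotopy-limit formula as a function of real time. -/
def Gfun (a : A n) (u : ℝ) : BL :=
  pieceHom α ιB f h n (max n ⌊u⌋₊) (le_max_left _ _) u a

theorem Gfun_eq_hLim (a : A n) (t : ℝ≥0) :
    Gfun α ιB f h n a (t : ℝ) = hLimFormula α ιB f h n a t := by
  rw [hLimFormula, transit_eq]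
  rfl

theorem Gfun_eq_piece {M : ℕ} (hM : n ≤ M) {u : ℝ} (hu : max n ⌊u⌋₊ = M) (a : A n) :
    Gfun α ιB f h n a u = pieceHom α ιB f h n M hM u a :=
  pieceHom_congr α ιB f h n hu _ _ _ _

end Main

end StmtAux

namespace StmtAux

section Main2

open AsymPaper Filter Topology TopologicalSpace Set
open scoped NNReal

universe u'

variable {A : ℕ → Type u'} [∀ n, NonUnitalCStarAlgebra (A n)]
variable {B : ℕ → Type u'} [∀ n, NonUnitalCStarAlgebra (B n)]
variable (α : ∀ n, A n →⋆ₙₐ[ℂ] A (n + 1)) (β : ∀ n, B n →⋆ₙₐ[ℂ] B (n + 1))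
variable {BL : Type u'} [NonUnitalCStarAlgebra BL] (ιB : ∀ n, B n →⋆ₙₐ[ℂ] BL)
variable (f : ℕ → ℕ) (hf : StrictMono f)
variable (φn : ∀ n, A n →⋆ₙₐ[ℂ] B (f n))
variable (h : ∀ n, A n →⋆ₙₐ[ℂ] C(unitInterval, B (f (n + 1))))
variable (n : ℕ)

theorem projIcc_zero_of_nonpos {u : ℝ} (hu : u ≤ 0) :
    Set.projIcc (0 : ℝ) 1 zero_le_one u = (0 : unitInterval) := by
  rw [Set.projIcc_of_le_left _ hu]; rfl

theorem projIcc_one_of_one_le {u : ℝ} (hu : (1 : ℝ) ≤ u) :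
    Set.projIcc (0 : ℝ) 1 zero_le_one u = (1 : unitInterval) := by
  rw [Set.projIcc_of_right_le _ hu]; rfl

theorem junction
    (hB1 : ∀ m, (ιB (m + 1)).comp (β m) = ιB m)
    (hev0 : ∀ k a, h k a 0 = transit β (hf (Nat.lt_succ_self k)).le (φn k a))
    (hev1 : ∀ k a, h k a 1 = φn (k + 1) (α k a))
    (m : ℕ) (hm : n ≤ m) (hm' : n ≤ m + 1) (a : A n) :
    pieceHom α ιB f h n (m + 1) hm' ((m : ℝ) + 1) a =
      pieceHom α ιB f h n m hm ((m : ℝ) + 1) a := by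
  rw [pieceHom_apply, pieceHom_apply]
  have e1 : ((m : ℝ) + 1) - ((m + 1 : ℕ) : ℝ) = 0 := by push_cast; ring
  have e2 : ((m : ℝ) + 1) - ((m : ℕ) : ℝ) = 1 := by ring
  rw [e1, e2, projIcc_zero_of_nonpos le_rfl, projIcc_one_of_one_le le_rfl]
  rw [hev0 (m + 1) (transitHom α hm' a), hev1 m (transitHom α hm a)]
  rw [iota_transit β ιB hB1]
  rw [transitHom_succ α hm hm']
  rfl

theorem Gfun_zero
    (hB1 : ∀ m, (ιB (m + 1)).comp (β m) = ιB m)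
    (hev0 : ∀ k a, h k a 0 = transit β (hf (Nat.lt_succ_self k)).le (φn k a))
    (a : A n) : Gfun α ιB f h n a 0 = ιB (f n) (φn n a) := by
  have hmax : max n ⌊(0 : ℝ)⌋₊ = n := by simp
  rw [Gfun_eq_piece α ιB f h n (le_refl n) hmax a, pieceHom_apply]
  have : ((0 : ℝ) - (n : ℕ)) ≤ 0 := by
    simp only [zero_sub, neg_nonpos]; exact Nat.cast_nonneg n
  rw [projIcc_zero_of_nonpos this, transitHom_self]
  show ιB (f (n + 1)) ((h n a) 0) = ιB (f n) (φn n a)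
  rw [hev0 n a, iota_transit β ιB hB1]

theorem floor_le_of_lt_add_one {u : ℝ} {k : ℕ} (hu : u < (k : ℝ) + 1) : ⌊u⌋₊ ≤ k := by
  rcases le_or_gt u 0 with h0 | h0
  · simp [Nat.floor_of_nonpos h0]
  · have hk : u < ((k + 1 : ℕ) : ℝ) := by push_cast; linarith
    have := (Nat.floor_lt h0.le).2 hk
    omega

theorem continuousOn_union_closed {X Y : Type*} [TopologicalSpace X] [TopologicalSpace Y]
    {s t : Set X} {g : X → Y} (hs : IsClosed s) (ht : IsClosed t)
    (hgs : ContinuousOn g s) (hgt : ContinuousOn g t) : ContinuousOn g (s ∪ t) := by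
  intro x hx
  have cs : ContinuousWithinAt g s x := by
    by_cases hxs : x ∈ s
    · exact hgs x hxs
    · exact continuousWithinAt_of_notMem_closure (by rwa [hs.closure_eq])
  have ct : ContinuousWithinAt g t x := by
    by_cases hxt : x ∈ t
    · exact hgt x hxt
    · exact continuousWithinAt_of_notMem_closure (by rwa [ht.closure_eq])
  exact cs.union ct

theorem continuousOn_Gfun_Iic
    (hB1 : ∀ m, (ιB (m + 1)).comp (β m) = ιB m)
    (hev0 : ∀ k a, h k a 0 = transit β (hf (Nat.lt_succ_self k)).le (φn k a))
    (hev1 : ∀ k a, h k a 1 = φn (k + 1) (α k a))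
    (a : A n) (k : ℕ) :
    ContinuousOn (Gfun α ιB f h n a) (Set.Iic ((n + 1 + k : ℕ) : ℝ)) := by
  induction k with
  | zero =>
      refine (continuous_pieceHom α ιB f h n n (le_refl n) a).continuousOn.congr ?_
      intro u hu
      simp only [Set.mem_Iic] at hu
      rcases lt_or_eq_of_le hu with hlt | heq
      · have h1 : ⌊u⌋₊ ≤ n := floor_le_of_lt_add_one (by push_cast at hlt ⊢; linarith)
        exact Gfun_eq_piece α ιB f h n (le_refl n) (max_eq_left h1) a
      · have hfl : ⌊u⌋₊ = n + 1 := by rw [heq]; exact_mod_cast Nat.floor_natCast _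
        have hmax : max n ⌊u⌋₊ = n + 1 := by omega
        rw [Gfun_eq_piece α ιB f h n (Nat.le_succ n) hmax a]
        have := junction α β ιB f hf φn h n hB1 hev0 hev1 n (le_refl n) (Nat.le_succ n) a
        have heq' : u = (n : ℝ) + 1 := by rw [heq]; push_cast; ring
        rw [heq']
        exact this
  | succ k ih =>
      set m : ℕ := n + 1 + k with hm
      have hcast : ((n + 1 + (k + 1) : ℕ) : ℝ) = ((m : ℕ) : ℝ) + 1 := by
        simp only [hm]; push_cast; ring
      have hsplit : Set.Iic (((n + 1 + (k + 1) : ℕ)) : ℝ) =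
          Set.Iic ((m : ℕ) : ℝ) ∪ Set.Icc ((m : ℕ) : ℝ) (((m : ℕ) : ℝ) + 1) := by
        rw [hcast, Set.Iic_union_Icc_eq_Iic (by linarith)]
      rw [hsplit]
      refine continuousOn_union_closed isClosed_Iic isClosed_Icc ih ?_
      have hnm : n ≤ m := by omega
      have hnm' : n ≤ m + 1 := by omega
      refine (continuous_pieceHom α ιB f h n m hnm a).continuousOn.congr ?_
      intro u hu
      obtain ⟨hu1, hu2⟩ := hu
      rcases lt_or_eq_of_le hu2 with hlt | heq
      · have hfl : ⌊u⌋₊ = m := by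
          have h1 : ⌊u⌋₊ ≤ m := floor_le_of_lt_add_one hlt
          have h2 : m ≤ ⌊u⌋₊ := Nat.le_floor hu1
          omega
        exact Gfun_eq_piece α ιB f h n hnm (by omega : max n ⌊u⌋₊ = m) a
      · have hfl : ⌊u⌋₊ = m + 1 := by
          rw [heq]
          rw [show ((m : ℕ) : ℝ) + 1 = ((m + 1 : ℕ) : ℝ) by push_cast; ring]
          exact_mod_cast Nat.floor_natCast _
        rw [Gfun_eq_piece α ιB f h n hnm' (by omega : max n ⌊u⌋₊ = m + 1) a, heq]
        exact junction α β ιB f hf φn h n hB1 hev0 hev1 m hnm hnm' a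

theorem continuous_Gfun
    (hB1 : ∀ m, (ιB (m + 1)).comp (β m) = ιB m)
    (hev0 : ∀ k a, h k a 0 = transit β (hf (Nat.lt_succ_self k)).le (φn k a))
    (hev1 : ∀ k a, h k a 1 = φn (k + 1) (α k a))
    (a : A n) : Continuous (Gfun α ιB f h n a) := by
  rw [continuous_iff_continuousAt]
  intro u
  obtain ⟨k, hk⟩ := exists_nat_gt u
  have h2 : u < ((n + 1 + k : ℕ) : ℝ) := by push_cast; push_cast at hk; linarith
  exact (continuousOn_Gfun_Iic α β ιB f hf φn h n hB1 hev0 hev1 a k).continuousAt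
    (Iic_mem_nhds h2)

end Main2

end StmtAux

namespace StmtAux

section Main3

open AsymPaper Filter Topology TopologicalSpace Set
open scoped NNReal

universe u''

variable {A : ℕ → Type u''} [∀ n, NonUnitalCStarAlgebra (A n)]
variable {B : ℕ → Type u''} [∀ n, NonUnitalCStarAlgebra (B n)]
variable (α : ∀ n, A n →⋆ₙₐ[ℂ] A (n + 1))
variable {BL : Type u''} [NonUnitalCStarAlgebra BL] (ιB : ∀ n, B n →⋆ₙₐ[ℂ] BL)
variable (f : ℕ → ℕ)
variable (h : ∀ n, A n →⋆ₙₐ[ℂ] C(unitInterval, B (f (n + 1))))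
variable (n : ℕ)

theorem Gfun_add (a b : A n) (u : ℝ) :
    Gfun α ιB f h n (a + b) u = Gfun α ιB f h n a u + Gfun α ιB f h n b u :=
  map_add (pieceHom α ιB f h n (max n ⌊u⌋₊) (le_max_left _ _) u) a b

theorem Gfun_smul (c : ℂ) (a : A n) (u : ℝ) :
    Gfun α ιB f h n (c • a) u = c • Gfun α ιB f h n a u :=
  map_smul (pieceHom α ιB f h n (max n ⌊u⌋₊) (le_max_left _ _) u) c a

theorem Gfun_star (a : A n) (u : ℝ) :
    Gfun α ιB f h n (star a) u = star (Gfun α ιB f h n a u) :=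
  map_star (pieceHom α ιB f h n (max n ⌊u⌋₊) (le_max_left _ _) u) a

theorem Gfun_mul (a b : A n) (u : ℝ) :
    Gfun α ιB f h n (a * b) u = Gfun α ιB f h n a u * Gfun α ιB f h n b u :=
  map_mul (pieceHom α ιB f h n (max n ⌊u⌋₊) (le_max_left _ _) u) a b

/-- The connecting asymptotic homotopy: at parameter `s` it runs the homotopy-limit
formula at time `(1 - s) * t`. -/
def theta (hG : ∀ a : A n, Continuous (Gfun α ιB f h n a)) :
    ℝ≥0 → A n → C(unitInterval, BL) := fun t a =>
  ⟨fun s => Gfun α ιB f h n a ((1 - (s : ℝ)) * (t : ℝ)),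
    (hG a).comp (((continuous_const.sub continuous_subtype_val).mul continuous_const))⟩

variable (hG : ∀ a : A n, Continuous (Gfun α ιB f h n a))

theorem theta_apply (t : ℝ≥0) (a : A n) (s : unitInterval) :
    theta α ιB f h n hG t a s = Gfun α ιB f h n a ((1 - (s : ℝ)) * (t : ℝ)) := rfl

theorem theta_isAsymptoticMorphism :
    IsAsymptoticMorphism (theta α ιB f h n hG) := by
  refine ⟨fun t => ⟨fun x y => ?_, fun c x => ?_⟩, fun t a => ?_, fun a => ?_, fun a b => ?_⟩
  · exact ContinuousMap.ext fun s => by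
      simp only [theta_apply, ContinuousMap.add_apply, Gfun_add]
  · exact ContinuousMap.ext fun s => by
      simp only [theta_apply, ContinuousMap.smul_apply, Gfun_smul]
  · exact ContinuousMap.ext fun s => by
      simp only [theta_apply, ContinuousMap.star_apply, Gfun_star]
  · -- continuity in t
    let F : C(ℝ≥0 × unitInterval, BL) :=
      ⟨fun p => Gfun α ιB f h n a ((1 - (p.2 : ℝ)) * (p.1 : ℝ)),
        (hG a).comp (((continuous_const.sub
          (continuous_subtype_val.comp continuous_snd)).mul
            (continuous_subtype_val.comp continuous_fst)))⟩
    have hEq : (fun t => theta α ιB f h n hG t a) = fun t => F.curry t := by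
      funext t
      exact ContinuousMap.ext fun s => rfl
    rw [hEq]
    exact F.curry.continuous
  · have : ∀ t, theta α ιB f h n hG t (a * b) =
        theta α ιB f h n hG t a * theta α ιB f h n hG t b := fun t =>
      ContinuousMap.ext fun s => by
        simp only [theta_apply, ContinuousMap.mul_apply, Gfun_mul]
    simp only [this, sub_self, norm_zero]
    exact tendsto_const_nhds

theorem theta_ev_zero (t : ℝ≥0) (a : A n) :
    theta α ιB f h n hG t a 0 = Gfun α ιB f h n a (t : ℝ) := by
  rw [theta_apply]
  norm_num

theorem theta_ev_one (t : ℝ≥0) (a : A n) :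
    theta α ιB f h n hG t a 1 = Gfun α ιB f h n a 0 := by
  rw [theta_apply]
  norm_num

end Main3

end StmtAux



/-- If `(f, (φ_n), (h_n))` is a strong homotopy morphism of inductive systems
of C*-algebras with each `A n` separable, with homotopy limit `φ : A ⇒ B`, then
`[[φ ∘ α_{∞,n}]] = [[β_{∞,f(n)} ∘ φ_n]]` in `[[A_n, B]]` for all `n`. -/
theorem stmt_1 {A : ℕ → Type u} [∀ n, NonUnitalCStarAlgebra (A n)]
    [∀ n, SeparableSpace (A n)]
    {B : ℕ → Type u} [∀ n, NonUnitalCStarAlgebra (B n)]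
    (α : ∀ n, A n →⋆ₙₐ[ℂ] A (n + 1)) (β : ∀ n, B n →⋆ₙₐ[ℂ] B (n + 1))
    {AL : Type u} [NonUnitalCStarAlgebra AL] (ιA : ∀ n, A n →⋆ₙₐ[ℂ] AL)
    (hA : IsInductiveLimit α AL ιA)
    {BL : Type u} [NonUnitalCStarAlgebra BL] (ιB : ∀ n, B n →⋆ₙₐ[ℂ] BL)
    (hB : IsInductiveLimit β BL ιB)
    (f : ℕ → ℕ) (hf : StrictMono f)
    (φn : ∀ n, A n →⋆ₙₐ[ℂ] B (f n))
    (h : ∀ n, A n →⋆ₙₐ[ℂ] C(unitInterval, B (f (n + 1))))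
    (hev0 : ∀ n a, h n a 0 = transit β (hf (Nat.lt_succ_self n)).le (φn n a))
    (hev1 : ∀ n a, h n a 1 = φn (n + 1) (α n a))
    (φ : ℝ≥0 → AL → BL) (hφ : IsHomotopyLimit α ιA ιB f h φ) :
    ∀ n : ℕ,
      AsympClass.mk ⟨compHomFun φ (ιA n), hφ.1.compHomFun (ιA n)⟩ =
        constClass ((ιB (f n)).comp (φn n)) := by
  intro n
  have hG : ∀ a : A n, Continuous (StmtAux.Gfun α ιB f h n a) :=
    StmtAux.continuous_Gfun α β ιB f hf φn h n hB.1 hev0 hev1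
  show Quot.mk AsympRel _ = Quot.mk AsympRel (constAM ((ιB (f n)).comp (φn n)))
  apply Quot.sound
  show AsympHomotopic (compHomFun φ (ιA n)) (constFun ((ιB (f n)).comp (φn n)))
  refine ⟨StmtAux.theta α ιB f h n hG,
    StmtAux.theta_isAsymptoticMorphism α ιB f h n hG, ?_, ?_⟩
  · -- endpoint 0: equivalent to φ ∘ ιA n
    intro a
    have key : ∀ t : ℝ≥0, StmtAux.theta α ιB f h n hG t a 0 = hLimFormula α ιB f h n a t :=
      fun t => (StmtAux.theta_ev_zero α ιB f h n hG t a).trans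
        (StmtAux.Gfun_eq_hLim α ιB f h n a t)
    have : (fun t : ℝ≥0 => ‖StmtAux.theta α ιB f h n hG t a 0 - compHomFun φ (ιA n) t a‖) =
        fun t => ‖φ t (ιA n a) - hLimFormula α ιB f h n a t‖ := by
      funext t
      rw [key t, norm_sub_rev]
      rfl
    rw [this]
    exact hφ.2 n a
  · -- endpoint 1: equal to the constant morphism
    intro a
    have key : ∀ t : ℝ≥0, StmtAux.theta α ιB f h n hG t a 1 =
        constFun ((ιB (f n)).comp (φn n)) t a := fun t => by
      rw [StmtAux.theta_ev_one α ιB f h n hG t a,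
        StmtAux.Gfun_zero α β ιB f hf φn h n hB.1 hev0 a]
      rfl
    simp only [key, sub_self, norm_zero]
    exact tendsto_const_nhds
end
end

section
/- Let A₀ and A be separable C*-algebras and let α: A₀ → A be a semiprojective *-homomorphism. Then there are a finite set G ⊆ A and δ > 0 such that for every C*-algebra B and all *-homomorphisms φ, ψ: A → B, if ‖φ(a) − ψ(a)‖ < δ for all a ∈ G, then φ ∘ α is homotopic to ψ ∘ α. -/
open Filter Topology Set
open scoped NNReal ZeroAtInfty OnePoint CStarAlgebra

noncomputable section

open AsymPaper Filter Topology TopologicalSpace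
open scoped NNReal ZeroAtInfty OnePoint CStarAlgebra

universe u v w

/-! Otherwise choose, for every `n`, a counterexample `φₙ, ψₙ : A → Bₙ` which is `1/(n+1)`-close on
the first `n + 1` terms of a dense sequence; then `‖φₙ a - ψₙ a‖ → 0` for every `a`. The pairs
`(x, y)` of bounded sequences in `∏ Bₘ` with `‖xₘ - yₘ‖ → 0` form the inductive limit of a system
with surjective connecting maps: its `n`-th stage consists of the triples `(x, y, f)` such that `fₘ`
is a path from `xₘ` to `yₘ` for `m ≥ n`, `fₘ = 0` for `m < n` and `‖fₘ - xₘ‖ → 0` uniformly, and the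
connecting maps set `fₙ` to zero. The last condition is what makes the norms converge along the
system. Semiprojectivity lifts `(φ•, ψ•) ∘ α` to some stage `n`, and the `n`-th path of the lift is
a homotopy from `φₙ ∘ α` to `ψₙ ∘ α`. -/

namespace AsymPaper

open unitInterval

section SegmentPath

variable {E : Type*} [NormedAddCommGroup E] [NormedSpace ℝ E]

def segmentPath (x y : E) : C(I, E) := ⟨fun t => x + (t : ℝ) • (y - x), by fun_prop⟩

@[simp]
theorem segmentPath_zero (x y : E) : segmentPath x y 0 = x := by simp [segmentPath]

@[simp]
theorem segmentPath_one (x y : E) : segmentPath x y 1 = y := by simp [segmentPath]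

theorem norm_segmentPath_apply_sub_le (x y : E) (t : I) : ‖segmentPath x y t - x‖ ≤ ‖y - x‖ := by
  simp only [segmentPath, ContinuousMap.coe_mk, add_sub_cancel_left, norm_smul, Real.norm_eq_abs,
    abs_of_nonneg t.2.1]
  exact mul_le_of_le_one_left (norm_nonneg _) t.2.2

theorem norm_segmentPath_sub_const_le (x y : E) :
    ‖segmentPath x y - ContinuousMap.const I x‖ ≤ ‖y - x‖ :=
  (ContinuousMap.norm_le _ (norm_nonneg _)).2 (norm_segmentPath_apply_sub_le x y)

theorem norm_segmentPath_le (x y : E) : ‖segmentPath x y‖ ≤ ‖x‖ + ‖y - x‖ :=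
  (ContinuousMap.norm_le _ (by positivity)).2 fun t =>
    (norm_le_norm_add_norm_sub' _ x).trans (by gcongr; exact norm_segmentPath_apply_sub_le x y t)

end SegmentPath

theorem isClosed_setOf_tendsto_norm_zero {X ι : Type*} [PseudoMetricSpace X] {l : Filter ι}
    {F : ι → Type*} [∀ i, SeminormedAddCommGroup (F i)] {g : ∀ i, X → F i} {K : ℝ≥0}
    (hg : ∀ i, LipschitzWith K (g i)) :
    IsClosed {x | Tendsto (fun i => ‖g i x‖) l (𝓝 0)} :=
  (LipschitzWith.uniformEquicontinuous (fun i x => ‖g i x‖) K fun i => by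
    have := lipschitzWith_one_norm.comp (hg i)
    rwa [one_mul] at this).equicontinuous.isClosed_setOfPred_tendsto continuous_const

theorem tendsto_max_of_eventually_le_add {ι : Type*} {l : Filter ι} {M : ℝ} {Q : ι → ℝ}
    (h : ∀ ε > 0, ∀ᶠ i in l, Q i ≤ M + ε) : Tendsto (fun i => max M (Q i)) l (𝓝 M) := by
  refine tendsto_order.2 ⟨fun b hb => .of_forall fun i => hb.trans_le (le_max_left _ _),
    fun b hb => ?_⟩
  filter_upwards [h ((b - M) / 2) (by linarith)] with i hi
  exact max_lt hb (by linarith)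

section CStarHom

variable {A : Type*} {B : Type*} [NonUnitalCStarAlgebra A] [NonUnitalCStarAlgebra B]

theorem lipschitzWith_one_starAlgHom (φ : A →⋆ₙₐ[ℂ] B) : LipschitzWith 1 φ :=
  LipschitzWith.of_dist_le_mul fun a b => by
    simpa [dist_eq_norm, map_sub] using NonUnitalStarAlgHom.norm_apply_le φ (a - b)

def constHom (X : Type*) [TopologicalSpace X] : A →⋆ₙₐ[ℂ] C(X, A) where
  toFun := ContinuousMap.const X
  map_smul' _ _ := rfl
  map_zero' := rfl
  map_add' _ _ := rfl
  map_mul' _ _ := rfl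
  map_star' _ := rfl

@[simp]
theorem constHom_apply (X : Type*) [TopologicalSpace X] (a : A) :
    constHom X a = ContinuousMap.const X a := rfl

end CStarHom

theorem tendsto_norm_sub_of_denseRange {A : Type*} [NonUnitalCStarAlgebra A] {B : ℕ → Type*}
    [∀ n, NonUnitalCStarAlgebra (B n)] (φ ψ : ∀ n, A →⋆ₙₐ[ℂ] B n) {u : ℕ → A}
    (hu : DenseRange u) (h : ∀ k, Tendsto (fun n => ‖φ n (u k) - ψ n (u k)‖) atTop (𝓝 0))
    (a : A) : Tendsto (fun n => ‖φ n a - ψ n a‖) atTop (𝓝 0) := by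
  have hclosed : IsClosed {a | Tendsto (fun n => ‖φ n a - ψ n a‖) atTop (𝓝 0)} :=
    isClosed_setOf_tendsto_norm_zero fun n =>
      (lipschitzWith_one_starAlgHom (φ n)).sub (lipschitzWith_one_starAlgHom (ψ n))
  exact hclosed.closure_subset_iff.2 (Set.range_subset_iff.2 h) (hu a)

section lpInfty

theorem lp.lipschitzWith_apply {ι : Type*} {F : ι → Type*} [∀ i, NormedAddCommGroup (F i)]
    (i : ι) : LipschitzWith 1 fun u : lp F ⊤ => u i :=
  LipschitzWith.of_dist_le_mul fun u v => by
    simpa [dist_eq_norm] using lp.norm_apply_le_norm ENNReal.top_ne_zero (u - v) i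

variable {E : ℕ → Type*} [∀ m, NonUnitalCStarAlgebra (E m)]

def lp.evalHom (m : ℕ) : lp E ⊤ →⋆ₙₐ[ℂ] E m where
  toFun u := u m
  map_smul' _ _ := rfl
  map_zero' := rfl
  map_add' _ _ := rfl
  map_mul' _ _ := rfl
  map_star' _ := rfl

@[simp]
theorem lp.evalHom_apply (m : ℕ) (u : lp E ⊤) : lp.evalHom m u = u m := rfl

def lp.seqHom {A : Type*} [NonUnitalCStarAlgebra A] (Φ : ∀ m, A →⋆ₙₐ[ℂ] E m) :
    A →⋆ₙₐ[ℂ] lp E ⊤ where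
  toFun a := ⟨fun m => Φ m a, memℓp_infty ⟨‖a‖, by
    rintro _ ⟨m, rfl⟩
    exact NonUnitalStarAlgHom.norm_apply_le _ _⟩⟩
  map_smul' c a := lp.ext (funext fun m => map_smul (Φ m) c a)
  map_zero' := lp.ext (funext fun m => map_zero (Φ m))
  map_add' a b := lp.ext (funext fun m => map_add (Φ m) a b)
  map_mul' a b := lp.ext (funext fun m => map_mul (Φ m) a b)
  map_star' a := lp.ext (funext fun m => map_star (Φ m) a)

@[simp]
theorem lp.seqHom_apply {A : Type*} [NonUnitalCStarAlgebra A] (Φ : ∀ m, A →⋆ₙₐ[ℂ] E m) (a : A)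
    (m : ℕ) : lp.seqHom Φ a m = Φ m a := rfl

def lp.zeroBelow (k : ℕ) : lp E ⊤ →⋆ₙₐ[ℂ] lp E ⊤ :=
  lp.seqHom fun m => if m < k then 0 else lp.evalHom m

theorem lp.zeroBelow_apply (k : ℕ) (u : lp E ⊤) (m : ℕ) :
    lp.zeroBelow k u m = if m < k then 0 else u m := by
  simp only [lp.zeroBelow, lp.seqHom_apply]
  split_ifs <;> rfl

def EqAtInfty (u v : lp E ⊤) : Prop := Tendsto (fun m => ‖u m - v m‖) atTop (𝓝 0)

namespace EqAtInfty

variable {u v u' v' : lp E ⊤}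

theorem refl (u : lp E ⊤) : EqAtInfty u u := by
  simp [EqAtInfty]

theorem congr_left (h : EqAtInfty u v) (hu : ∀ᶠ m in atTop, u m = u' m) : EqAtInfty u' v :=
  h.congr' (hu.mono fun m hm => by rw [hm])

theorem add (h : EqAtInfty u v) (h' : EqAtInfty u' v') : EqAtInfty (u + u') (v + v') := by
  refine squeeze_zero (fun m => norm_nonneg _) (fun m => ?_) (by simpa using Tendsto.add h h')
  simpa [add_sub_add_comm] using norm_add_le (u m - v m) (u' m - v' m)

theorem mul (h : EqAtInfty u v) (h' : EqAtInfty u' v') : EqAtInfty (u * u') (v * v') := by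
  refine squeeze_zero (fun m => norm_nonneg _) (fun m => ?_)
    (by simpa using (Tendsto.mul_const ‖u'‖ h).add (Tendsto.const_mul ‖v‖ h'))
  have hsplit : u m * u' m - v m * v' m = (u m - v m) * u' m + v m * (u' m - v' m) := by
    noncomm_ring
  simp only [lp.infty_coeFn_mul, Pi.mul_apply, hsplit]
  refine (norm_add_le _ _).trans (add_le_add ?_ ?_)
  · exact (norm_mul_le _ _).trans
      (by gcongr; exact lp.norm_apply_le_norm ENNReal.top_ne_zero u' m)
  · exact (norm_mul_le _ _).trans
      (by gcongr; exact lp.norm_apply_le_norm ENNReal.top_ne_zero v m)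

theorem smul (c : ℂ) (h : EqAtInfty u v) : EqAtInfty (c • u) (c • v) := by
  simpa [EqAtInfty, ← smul_sub, norm_smul] using Tendsto.const_mul ‖c‖ h

theorem star (h : EqAtInfty u v) : EqAtInfty (star u) (star v) := by
  simpa [EqAtInfty, ← star_sub] using h

end EqAtInfty

theorem isClosed_setOf_eqAtInfty {X : Type*} [PseudoMetricSpace X] {f g : X → lp E ⊤}
    {K K' : ℝ≥0} (hf : LipschitzWith K f) (hg : LipschitzWith K' g) :
    IsClosed {x | EqAtInfty (f x) (g x)} :=
  isClosed_setOf_tendsto_norm_zero fun m =>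
    ((lp.lipschitzWith_apply m).comp hf).sub ((lp.lipschitzWith_apply m).comp hg)

theorem EqAtInfty.eventually_norm_zeroBelow_le {u v : lp E ⊤} (h : EqAtInfty u v) {ε : ℝ}
    (hε : 0 < ε) : ∀ᶠ k in atTop, ‖lp.zeroBelow k u‖ ≤ ‖v‖ + ε := by
  obtain ⟨K, hK⟩ := eventually_atTop.1 ((tendsto_order.1 h).2 ε hε)
  filter_upwards [eventually_ge_atTop K] with k hk
  refine lp.norm_le_of_forall_le (by positivity) fun m => ?_
  rw [lp.zeroBelow_apply]
  split_ifs with hm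
  · rw [norm_zero]
    positivity
  · calc ‖u m‖ ≤ ‖v m‖ + ‖u m - v m‖ := norm_le_norm_add_norm_sub' _ _
      _ ≤ ‖v‖ + ε := add_le_add (lp.norm_apply_le_norm ENNReal.top_ne_zero v m)
          (hK m (by omega)).le

end lpInfty

section PathSystem

variable (B : ℕ → Type u) [∀ n, NonUnitalCStarAlgebra (B n)]

abbrev SeqPair : Type u := lp (fun m => B m) ⊤ × lp (fun m => B m) ⊤

abbrev PathSeq : Type u := lp (fun m => C(I, B m)) ⊤

def constSeq : lp (fun m => B m) ⊤ →⋆ₙₐ[ℂ] PathSeq B :=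
  lp.seqHom fun m => (constHom I).comp (lp.evalHom m)

@[simp]
theorem constSeq_apply (x : lp (fun m => B m) ⊤) (m : ℕ) :
    constSeq B x m = ContinuousMap.const I (x m) := rfl

def limitAlg : NonUnitalStarSubalgebra ℂ (SeqPair B) where
  carrier := {p | EqAtInfty p.1 p.2}
  zero_mem' := EqAtInfty.refl 0
  add_mem' hp hq := hp.add hq
  mul_mem' hp hq := hp.mul hq
  smul_mem' c _ hp := hp.smul c
  star_mem' hp := hp.star

instance isClosed_limitAlg : IsClosed (limitAlg B : Set (SeqPair B)) :=
  isClosed_setOf_eqAtInfty LipschitzWith.prod_fst LipschitzWith.prod_snd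

structure IsStageElem (n : ℕ) (z : SeqPair B × PathSeq B) : Prop where
  apply_zero : ∀ m, n ≤ m → z.2 m 0 = z.1.1 m
  apply_one : ∀ m, n ≤ m → z.2 m 1 = z.1.2 m
  eq_zero : ∀ m < n, z.2 m = 0
  eqAtInfty : EqAtInfty z.2 (constSeq B z.1.1)

def stageAlg (n : ℕ) : NonUnitalStarSubalgebra ℂ (SeqPair B × PathSeq B) where
  carrier := {z | IsStageElem B n z}
  zero_mem' := ⟨fun m _ => rfl, fun m _ => rfl, fun m _ => rfl, by simpa using EqAtInfty.refl 0⟩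
  add_mem' {z w} hz hw :=
    ⟨fun m hm => by simp [hz.apply_zero m hm, hw.apply_zero m hm],
      fun m hm => by simp [hz.apply_one m hm, hw.apply_one m hm],
      fun m hm => by simp [hz.eq_zero m hm, hw.eq_zero m hm],
      by simpa only [Prod.fst_add, Prod.snd_add, map_add] using hz.eqAtInfty.add hw.eqAtInfty⟩
  mul_mem' {z w} hz hw :=
    ⟨fun m hm => by simp [lp.infty_coeFn_mul, hz.apply_zero m hm, hw.apply_zero m hm],
      fun m hm => by simp [lp.infty_coeFn_mul, hz.apply_one m hm, hw.apply_one m hm],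
      fun m hm => by simp [lp.infty_coeFn_mul, hz.eq_zero m hm],
      by simpa only [Prod.fst_mul, Prod.snd_mul, map_mul] using hz.eqAtInfty.mul hw.eqAtInfty⟩
  smul_mem' c z hz :=
    ⟨fun m hm => by simp [hz.apply_zero m hm], fun m hm => by simp [hz.apply_one m hm],
      fun m hm => by simp [hz.eq_zero m hm],
      by simpa only [Prod.smul_fst, Prod.smul_snd, map_smul] using hz.eqAtInfty.smul c⟩
  star_mem' {z} hz :=
    ⟨fun m hm => by simp [hz.apply_zero m hm], fun m hm => by simp [hz.apply_one m hm],
      fun m hm => by simp [hz.eq_zero m hm],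
      by simpa only [Prod.fst_star, Prod.snd_star, map_star] using hz.eqAtInfty.star⟩

-- Instance search does not find this on the nested product; the C⋆-algebra structure of
-- `stageAlg B n` needs it.
instance : NonUnitalSubringClass (NonUnitalStarSubalgebra ℂ (SeqPair B × PathSeq B))
    (SeqPair B × PathSeq B) :=
  @NonUnitalStarSubalgebra.instNonUnitalSubringClass ℂ (SeqPair B × PathSeq B) _ _ _ _

instance isClosed_stageAlg (n : ℕ) : IsClosed (stageAlg B n : Set (SeqPair B × PathSeq B)) := by
  have hx : ∀ m, Continuous fun z : SeqPair B × PathSeq B => z.1.1 m := fun m =>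
    (lp.lipschitzWith_apply m).continuous.comp (continuous_fst.comp continuous_fst)
  have hy : ∀ m, Continuous fun z : SeqPair B × PathSeq B => z.1.2 m := fun m =>
    (lp.lipschitzWith_apply m).continuous.comp (continuous_snd.comp continuous_fst)
  have hf : ∀ m, Continuous fun z : SeqPair B × PathSeq B => z.2 m := fun m =>
    (lp.lipschitzWith_apply m).continuous.comp continuous_snd
  have hsplit : (stageAlg B n : Set (SeqPair B × PathSeq B)) =
      (⋂ m ≥ n, {z | z.2 m 0 = z.1.1 m}) ∩ (⋂ m ≥ n, {z | z.2 m 1 = z.1.2 m}) ∩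
        (⋂ m < n, {z | z.2 m = 0}) ∩ {z | EqAtInfty z.2 (constSeq B z.1.1)} := by
    ext z
    simp only [Set.mem_inter_iff, Set.mem_iInter, Set.mem_ofPred_eq]
    exact ⟨fun ⟨h₀, h₁, h₂, h₃⟩ => ⟨⟨⟨h₀, h₁⟩, h₂⟩, h₃⟩,
      fun ⟨⟨⟨h₀, h₁⟩, h₂⟩, h₃⟩ => ⟨h₀, h₁, h₂, h₃⟩⟩
  rw [hsplit]
  refine (((isClosed_biInter fun m _ => isClosed_eq ?_ (hx m)).inter
    (isClosed_biInter fun m _ => isClosed_eq ?_ (hy m))).inter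
    (isClosed_biInter fun m _ => isClosed_eq (hf m) continuous_const)).inter
    (isClosed_setOf_eqAtInfty LipschitzWith.prod_snd
      (g := fun z : SeqPair B × PathSeq B => constSeq B z.1.1)
      ((lipschitzWith_one_starAlgHom _).comp (LipschitzWith.prod_fst.comp LipschitzWith.prod_fst)))
  · exact (continuous_eval_const 0).comp (hf m)
  · exact (continuous_eval_const 1).comp (hf m)

variable {B}

theorem IsStageElem.eqAtInfty_fst_snd {n : ℕ} {z : SeqPair B × PathSeq B}
    (hz : IsStageElem B n z) : EqAtInfty z.1.1 z.1.2 := by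
  refine squeeze_zero' (.of_forall fun m => norm_nonneg _)
    ((eventually_ge_atTop n).mono fun m hm => ?_) hz.eqAtInfty
  calc ‖z.1.1 m - z.1.2 m‖ = ‖(z.2 m - constSeq B z.1.1 m) 1‖ := by
        simp [hz.apply_one m hm, norm_sub_rev]
    _ ≤ ‖z.2 m - constSeq B z.1.1 m‖ := ContinuousMap.norm_coe_le_norm _ _

variable (B)

def cutPaths (k : ℕ) : SeqPair B × PathSeq B →⋆ₙₐ[ℂ] SeqPair B × PathSeq B :=
  (NonUnitalStarAlgHom.fst ℂ _ _).prod ((lp.zeroBelow k).comp (NonUnitalStarAlgHom.snd ℂ _ _))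

@[simp]
theorem cutPaths_apply (k : ℕ) (z : SeqPair B × PathSeq B) :
    cutPaths B k z = (z.1, lp.zeroBelow k z.2) := rfl

variable {B}

theorem IsStageElem.cutPaths_of_le {n k : ℕ} {z : SeqPair B × PathSeq B} (hz : IsStageElem B n z)
    (hnk : n ≤ k) : IsStageElem B k (cutPaths B k z) where
  apply_zero m hm := by simp [lp.zeroBelow_apply, hz.apply_zero m (hnk.trans hm), not_lt.2 hm]
  apply_one m hm := by simp [lp.zeroBelow_apply, hz.apply_one m (hnk.trans hm), not_lt.2 hm]
  eq_zero m hm := by simp [lp.zeroBelow_apply, hm]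
  eqAtInfty := hz.eqAtInfty.congr_left <| (eventually_ge_atTop k).mono fun m hm => by
    simp [lp.zeroBelow_apply, not_lt.2 hm]

theorem IsStageElem.cutPaths_self {n : ℕ} {z : SeqPair B × PathSeq B} (hz : IsStageElem B n z) :
    cutPaths B n z = z := by
  refine Prod.ext rfl (lp.ext (funext fun m => ?_))
  by_cases hm : m < n
  · simp [lp.zeroBelow_apply, hm, hz.eq_zero m hm]
  · simp [lp.zeroBelow_apply, hm]

theorem cutPaths_cutPaths {k k' : ℕ} (h : k ≤ k') (z : SeqPair B × PathSeq B) :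
    cutPaths B k' (cutPaths B k z) = cutPaths B k' z := by
  refine Prod.ext rfl (lp.ext (funext fun m => ?_))
  by_cases hm : m < k'
  · simp [lp.zeroBelow_apply, hm]
  · simp [lp.zeroBelow_apply, hm, show ¬m < k by omega]

variable (B)

def stageSucc (n : ℕ) : stageAlg B n →⋆ₙₐ[ℂ] stageAlg B (n + 1) :=
  NonUnitalStarAlgHom.codRestrict
    ((cutPaths B (n + 1)).comp (NonUnitalStarSubalgebraClass.subtype (R := ℂ) (stageAlg B n))) _
    fun z => z.2.cutPaths_of_le n.le_succ

def stageToLimit (n : ℕ) : stageAlg B n →⋆ₙₐ[ℂ] limitAlg B :=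
  NonUnitalStarAlgHom.codRestrict ((NonUnitalStarAlgHom.fst ℂ _ _).comp
    (NonUnitalStarSubalgebraClass.subtype (R := ℂ) (stageAlg B n))) _
    fun z => z.2.eqAtInfty_fst_snd

theorem stageToLimit_apply (n : ℕ) (z : stageAlg B n) :
    (stageToLimit B n z : SeqPair B) = (z : SeqPair B × PathSeq B).1 := rfl

def evalStage (n : ℕ) : stageAlg B n →⋆ₙₐ[ℂ] C(I, B n) :=
  (lp.evalHom n).comp ((NonUnitalStarAlgHom.snd ℂ _ _).comp
    (NonUnitalStarSubalgebraClass.subtype (R := ℂ) (stageAlg B n)))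

theorem stageSucc_surjective (n : ℕ) : Function.Surjective (stageSucc B n) := by
  rintro ⟨z, hz⟩
  set f := z.2 + lp.single ⊤ n (segmentPath (z.1.1 n) (z.1.2 n)) with hf
  have hf_gt : ∀ m, n < m → f m = z.2 m := fun m hm => by
    simp [hf, hm.ne']
  have hf_self : f n = segmentPath (z.1.1 n) (z.1.2 n) := by
    simp [hf, hz.eq_zero n n.lt_succ_self]
  have hmem : IsStageElem B n (z.1, f) :=
    { apply_zero := fun m hm => by
        rcases hm.eq_or_lt with rfl | hm
        · simp [hf_self]
        · simpa [hf_gt m hm] using hz.apply_zero m hm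
      apply_one := fun m hm => by
        rcases hm.eq_or_lt with rfl | hm
        · simp [hf_self]
        · simpa [hf_gt m hm] using hz.apply_one m hm
      eq_zero := fun m hm => by
        simp [hf, hm.ne, hz.eq_zero m (by omega)]
      eqAtInfty := hz.eqAtInfty.congr_left <|
        (eventually_gt_atTop n).mono fun m hm => (hf_gt m hm).symm }
  refine ⟨⟨(z.1, f), hmem⟩, Subtype.ext (Prod.ext rfl (lp.ext (funext fun m => ?_)))⟩
  show lp.zeroBelow (n + 1) f m = z.2 m
  rw [lp.zeroBelow_apply]
  split_ifs with hm
  · exact (hz.eq_zero m hm).symm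
  · exact hf_gt m (by omega)

theorem stageToLimit_zero_surjective : Function.Surjective (stageToLimit B 0) := by
  rintro ⟨p, hp⟩
  let f : PathSeq B := ⟨fun m => segmentPath (p.1 m) (p.2 m), memℓp_infty
    ⟨‖p.1‖ + (‖p.2‖ + ‖p.1‖), by
      rintro _ ⟨m, rfl⟩
      have h₁ := lp.norm_apply_le_norm ENNReal.top_ne_zero p.1 m
      have h₂ := lp.norm_apply_le_norm ENNReal.top_ne_zero p.2 m
      exact (norm_segmentPath_le _ _).trans
        (add_le_add h₁ ((norm_sub_le _ _).trans (add_le_add h₂ h₁)))⟩⟩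
  have hmem : IsStageElem B 0 (p, f) :=
    { apply_zero := fun m _ => segmentPath_zero _ _
      apply_one := fun m _ => segmentPath_one _ _
      eq_zero := fun m hm => absurd hm m.not_lt_zero
      eqAtInfty := squeeze_zero (fun m => norm_nonneg _)
        (fun m => (norm_segmentPath_sub_const_le _ _).trans_eq (norm_sub_rev _ _)) hp }
  exact ⟨⟨(p, f), hmem⟩, rfl⟩

theorem transit_stageSucc {n m : ℕ} (h : n ≤ m) (z : stageAlg B n) :
    (transit (A := fun k => stageAlg B k) (stageSucc B) h z : SeqPair B × PathSeq B) =
      cutPaths B m z := by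
  induction m, h using Nat.le_induction with
  | base => rw [transit, Nat.leRecOn_self, z.2.cutPaths_self]
  | succ m hm ih =>
    rw [transit, Nat.leRecOn_succ hm]
    exact (congrArg (cutPaths B (m + 1)) ih).trans (cutPaths_cutPaths m.le_succ _)

theorem isInductiveLimit_stage :
    IsInductiveLimit (A := fun n => stageAlg B n) (stageSucc B) (limitAlg B) (stageToLimit B) := by
  refine ⟨fun n => rfl, ?_, fun n z => ?_⟩
  · refine dense_univ.mono fun p _ => Set.mem_iUnion.2 ⟨0, stageToLimit_zero_surjective B p⟩
  · have hnorm : ∀ k, ‖transit (A := fun k => stageAlg B k) (stageSucc B) (n.le_add_right k) z‖ =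
        max ‖(z : SeqPair B × PathSeq B).1‖ ‖lp.zeroBelow (n + k) (z : SeqPair B × PathSeq B).2‖ :=
      fun k => by
        rw [← Prod.norm_mk]
        exact congrArg norm (transit_stageSucc B _ z)
    simp only [hnorm]
    refine tendsto_max_of_eventually_le_add fun ε hε => ?_
    filter_upwards [(tendsto_atTop_mono (fun k => Nat.le_add_left k n) tendsto_id).eventually
      (z.2.eqAtInfty.eventually_norm_zeroBelow_le hε)] with k hk
    exact hk.trans (by gcongr; exact (NonUnitalStarAlgHom.norm_apply_le _ _).trans (norm_fst_le _))

end PathSystem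

section Stability

variable {A₀ A : Type u} [NonUnitalCStarAlgebra A₀] [NonUnitalCStarAlgebra A]
variable {B : ℕ → Type u} [∀ n, NonUnitalCStarAlgebra (B n)]

def seqPair (φ ψ : ∀ n, A →⋆ₙₐ[ℂ] B n)
    (hφψ : ∀ a, Tendsto (fun n => ‖φ n a - ψ n a‖) atTop (𝓝 0)) : A →⋆ₙₐ[ℂ] limitAlg B :=
  NonUnitalStarAlgHom.codRestrict ((lp.seqHom φ).prod (lp.seqHom ψ)) _ hφψ

theorem seqPair_apply (φ ψ : ∀ n, A →⋆ₙₐ[ℂ] B n)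
    (hφψ : ∀ a, Tendsto (fun n => ‖φ n a - ψ n a‖) atTop (𝓝 0)) (a : A) :
    (seqPair φ ψ hφψ a : SeqPair B) = (lp.seqHom φ a, lp.seqHom ψ a) := rfl

theorem exists_homHomotopic_of_tendsto (φ ψ : ∀ n, A →⋆ₙₐ[ℂ] B n)
    (hφψ : ∀ a, Tendsto (fun n => ‖φ n a - ψ n a‖) atTop (𝓝 0)) {α : A₀ →⋆ₙₐ[ℂ] A}
    (hα : IsSemiprojective.{u} α) : ∃ n, HomHomotopic ((φ n).comp α) ((ψ n).comp α) := by
  have hlim := isInductiveLimit_stage B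
  obtain ⟨n, H, hH⟩ := hα _ _ _ _ (stageSucc_surjective B) hlim (seqPair φ ψ hφψ)
  have hlift : ∀ a, (H a : SeqPair B × PathSeq B).1 = (lp.seqHom φ (α a), lp.seqHom ψ (α a)) :=
    fun a => by
      have h := congrArg Subtype.val (DFunLike.congr_fun hH a)
      rwa [NonUnitalStarAlgHom.comp_apply, NonUnitalStarAlgHom.comp_apply, stageToLimit_apply,
        seqPair_apply] at h
  refine ⟨n, (evalStage B n).comp H, fun a => ?_, fun a => ?_⟩
  · exact ((H a).2.apply_zero n le_rfl).trans (congrArg (fun p => p.1 n) (hlift a))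
  · exact ((H a).2.apply_one n le_rfl).trans (congrArg (fun p => p.2 n) (hlift a))

end Stability

end AsymPaper

theorem stmt_3_general {A₀ A : Type u} [NonUnitalCStarAlgebra A₀] [NonUnitalCStarAlgebra A]
    [SeparableSpace A]
    (α : A₀ →⋆ₙₐ[ℂ] A) (hα : IsSemiprojective.{u} α) :
    ∃ (G : Finset A) (δ : ℝ), 0 < δ ∧
      ∀ (B : Type u) [NonUnitalCStarAlgebra B] (φ ψ : A →⋆ₙₐ[ℂ] B),
        (∀ a ∈ G, ‖φ a - ψ a‖ < δ) → HomHomotopic (φ.comp α) (ψ.comp α) := by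
  classical
  by_contra! h
  set u := denseSeq A
  choose B _ φ ψ hclose hnot using fun n : ℕ =>
    h ((Finset.range (n + 1)).image u) (1 / (n + 1)) (by positivity)
  have hdense : ∀ k, Tendsto (fun n => ‖φ n (u k) - ψ n (u k)‖) atTop (𝓝 0) := fun k =>
    squeeze_zero' (.of_forall fun n => norm_nonneg _)
      ((eventually_ge_atTop k).mono fun n hn => (hclose n (u k) (Finset.mem_image_of_mem u
        (Finset.mem_range.2 (by omega)))).le) tendsto_one_div_add_atTop_nhds_zero_nat
  obtain ⟨n, hn⟩ := exists_homHomotopic_of_tendsto φ ψ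
    (tendsto_norm_sub_of_denseRange φ ψ (denseRange_denseSeq A) hdense) hα
  exact hnot n hn

/-- Homotopy stability for semiprojective ⋆-homomorphisms. -/
theorem stmt_3 {A₀ A : Type u} [NonUnitalCStarAlgebra A₀] [NonUnitalCStarAlgebra A]
    [SeparableSpace A₀] [SeparableSpace A]
    (α : A₀ →⋆ₙₐ[ℂ] A) (hα : IsSemiprojective.{u} α) :
    ∃ (G : Finset A) (δ : ℝ), 0 < δ ∧
      ∀ (B : Type u) [NonUnitalCStarAlgebra B] (φ ψ : A →⋆ₙₐ[ℂ] B),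
        (∀ a ∈ G, ‖φ a - ψ a‖ < δ) → HomHomotopic (φ.comp α) (ψ.comp α) :=
  stmt_3_general α hα
end
end
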